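/- An ultrafilter U over κ is (λ,μ;ω)-regular if and only if there is a family {X_β : β < λ} of U-large subsets of κ^ω such that every subfamily indexed by a set S ⊆ λ of cardinality μ has empty intersection. -/

import Mathlib

universe u

namespace UMeas

variable {A : Type u}

/-- The first `n` values of an infinite sequence, as a list. -/
def seg (s : ℕ → A) (n : ℕ) : List A := List.ofFn (fun i : Fin n => s i)

/-- `T` is a `U`-branching tree: a set of finite sequences closed under initial
segments, containing the empty sequence, whose branching sets are in `U`. -/
def IsUTree (U : Ultrafilter A) (T : Set (List A)) : Prop :=
  ([] ∈ T) ∧ (∀ σ ∈ T, ∀ τ : List A, τ <+: σ → τ ∈ T) ∧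
    ∀ σ ∈ T, {a : A | σ ++ [a] ∈ T} ∈ U

/-- The set of infinite branches through `T`. -/
def branches (T : Set (List A)) : Set (ℕ → A) := {s | ∀ n, seg s n ∈ T}

/-- Concatenation `σ⌢s` of a finite sequence with an infinite sequence. -/
def app (σ : List A) (s : ℕ → A) : ℕ → A :=
  fun n => if h : n < σ.length then σ.get ⟨n, h⟩ else s (n - σ.length)

/-- The section `X↾σ = {s | σ⌢s ∈ X}`. -/
def sect (X : Set (ℕ → A)) (σ : List A) : Set (ℕ → A) := {s | app σ s ∈ X}

def ULarge (U : Ultrafilter A) (X : Set (ℕ → A)) : Prop :=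
  ∃ T, IsUTree U T ∧ branches T ⊆ X

def USmall (U : Ultrafilter A) (X : Set (ℕ → A)) : Prop :=
  ∃ T, IsUTree U T ∧ branches T ∩ X = ∅

def UDetermined (U : Ultrafilter A) (X : Set (ℕ → A)) : Prop :=
  ULarge U X ∨ USmall U X

def UNull (U : Ultrafilter A) (X : Set (ℕ → A)) : Prop :=
  ∀ σ : List A, USmall U (sect X σ)

def UMeasurable (U : Ultrafilter A) (X : Set (ℕ → A)) : Prop :=
  ∀ σ : List A, UDetermined U (sect X σ)

end UMeas

namespace UMeas

/-- Sequences of ordinal length `β` with values in `A`. -/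
def OSeq (A : Type u) (β : Ordinal.{u}) := ∀ γ : Ordinal.{u}, γ < β → A

/-- Restriction `s↾γ` of an ordinal-length sequence. -/
def ores {A : Type u} {β : Ordinal.{u}} (s : OSeq A β) (γ : Ordinal.{u}) (h : γ ≤ β) :
    OSeq A γ := fun δ hδ => s δ (hδ.trans_le h)

/-- Extension `s⌢⟨a⟩` of an ordinal-length sequence by one element. -/
noncomputable def oext {A : Type u} {β : Ordinal.{u}} (s : OSeq A β) (a : A) : OSeq A (β + 1) :=
  fun δ hδ => if h : δ < β then s δ h else a

/-- A closed `U`-branching tree of height `α`: for each `β`, `mem β` is the set of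
sequences of length `β` in the tree (only levels `β < α` are relevant). -/
structure ClosedUBT (A : Type u) (U : Ultrafilter A) (α : Ordinal.{u}) where
  mem : ∀ β : Ordinal.{u}, Set (OSeq A β)
  isTree : ∀ β γ : Ordinal.{u}, β < α → (h : γ ≤ β) → ∀ s ∈ mem β, ores s γ h ∈ mem γ
  succ : ∀ β : Ordinal.{u}, β + 1 < α → ∀ s ∈ mem β, {a : A | oext s a ∈ mem (β + 1)} ∈ U
  nonsucc : ∀ β : Ordinal.{u}, β < α → (¬ ∃ γ : Ordinal.{u}, β = γ + 1) →
    ∀ s : OSeq A β, s ∈ mem β ↔ ∀ γ : Ordinal.{u}, (h : γ < β) → ores s γ h.le ∈ mem γ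

/-- `U` is `(l, m; α)`-regular: there is a family of `l` closed `U`-branching trees of
height `α + 1` such that no subfamily of size `m` has a common maximal element. -/
def LMARegular {A : Type u} (U : Ultrafilter A) (l m : Cardinal.{u}) (α : Ordinal.{u}) : Prop :=
  ∃ T : (Cardinal.ord l).ToType → ClosedUBT A U (α + 1),
    ∀ S : Set (Cardinal.ord l).ToType, Cardinal.mk ↥S = m →
      ¬ ∃ s : OSeq A α, ∀ β ∈ S, s ∈ (T β).mem α

end UMeas

/-! A closed `U`-branching tree of height `ω + 1` is determined by its finite levels: they form a
`U`-branching tree of finite sequences, and since `ω` is a limit, its top level consists exactly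
of the branches of that tree. Conversely, every `U`-branching tree closes up to a closed tree of
height `ω + 1` whose top level is its set of branches. So a common maximal element of a
subfamily of closed trees is a common branch of the corresponding trees of finite sequences,
i.e. a point in the intersection of any `U`-large sets containing their branches. -/

namespace UMeas

open Ordinal Order

variable {A : Type u}

theorem not_exists_eq_add_one_of_isSuccPrelimit {β : Ordinal.{u}} (h : IsSuccPrelimit β) :
    ¬ ∃ γ : Ordinal.{u}, β = γ + 1 := by
  rintro ⟨γ, rfl⟩
  exact h.succ_ne γ (succ_eq_add_one γ)

theorem ores_oext_of_le {β γ : Ordinal.{u}} (s : OSeq A β) (a : A) (hγ : γ ≤ β) :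
    ores (oext s a) γ (hγ.trans le_self_add) = ores s γ hγ := by
  funext δ hδ
  exact dif_pos (hδ.trans_le hγ)

namespace OSeq

variable {β : Ordinal.{u}}

def Represents (s : OSeq A β) (σ : List A) : Prop :=
  (σ.length : Ordinal) = β ∧ ∀ (i : ℕ) (hi : (i : Ordinal) < β), σ[i]? = some (s i hi)

theorem represents_nil (s : OSeq A 0) : s.Represents [] :=
  ⟨by simp, fun _ hi => by simp at hi⟩

theorem represents_seg {s : OSeq A β} {t : ℕ → A} (hst : ∀ (k : ℕ) hk, s k hk = t k) (n : ℕ)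
    (hn : (n : Ordinal) ≤ β) : (ores s n hn).Represents (seg t n) :=
  ⟨by simp [seg], fun i hi => by
    have : i < n := by exact_mod_cast hi
    simp [seg, ores, this, hst]⟩

theorem exists_represents {n : ℕ} (s : OSeq A n) : ∃ σ, s.Represents σ :=
  ⟨List.ofFn fun i : Fin n => s i (Nat.cast_lt.2 i.2), by simp, fun i hi => by
    simp [show i < n by exact_mod_cast hi]⟩

namespace Represents

variable {s : OSeq A β} {σ : List A}

theorem lt_omega0 (h : s.Represents σ) : β < ω :=
  h.1 ▸ natCast_lt_omega0 _

theorem list_unique {τ : List A} (hσ : s.Represents σ) (hτ : s.Represents τ) : σ = τ := by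
  refine List.ext_getElem? fun i => ?_
  by_cases hi : (i : Ordinal) < β
  · rw [hσ.2 i hi, hτ.2 i hi]
  · rw [← hσ.1, Nat.cast_lt, not_lt] at hi
    have hτi : τ.length ≤ i := by rwa [← Nat.cast_le (α := Ordinal), hτ.1, ← hσ.1, Nat.cast_le]
    rw [List.getElem?_eq_none hi, List.getElem?_eq_none hτi]

theorem seq_unique {s' : OSeq A β} (h : s.Represents σ) (h' : s'.Represents σ) : s = s' := by
  funext i hi
  obtain ⟨n, rfl⟩ := Ordinal.lt_omega0.1 (hi.trans h.lt_omega0)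
  exact Option.some_injective _ ((h.2 n hi).symm.trans (h'.2 n hi))

theorem ores_of_prefix {τ : List A} (h : s.Represents σ) (hτ : τ <+: σ)
    (hle : (τ.length : Ordinal) ≤ β) : (ores s τ.length hle).Represents τ :=
  ⟨rfl, fun i hi => by
    obtain ⟨_, rfl⟩ := hτ
    show τ[i]? = some (s i (hi.trans_le hle))
    rw [← h.2 i, List.getElem?_append_left (by exact_mod_cast hi)]⟩

theorem oext (h : s.Represents σ) (a : A) : (oext s a).Represents (σ ++ [a]) := by
  refine ⟨by simp [← h.1], fun i hi => ?_⟩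
  simp only [UMeas.oext]
  split_ifs with hiβ
  · rw [← h.2 i hiβ]
    exact List.getElem?_append_left (by rw [← h.1] at hiβ; exact_mod_cast hiβ)
  · have : i = σ.length := by
      rw [← h.1, ← Nat.cast_add_one, Nat.cast_lt] at hi
      rw [← h.1, Nat.cast_lt] at hiβ
      omega
    simp [this]

end Represents

end OSeq

-- `γ.card.toNat` is the `n : ℕ` with `γ = n` whenever `γ < ω`.
noncomputable def omegaSeq (t : ℕ → A) : OSeq A ω := fun γ _ => t γ.card.toNat

theorem omegaSeq_natCast (t : ℕ → A) (k : ℕ) (hk : (k : Ordinal) < ω) :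
    omegaSeq t k hk = t k := by
  simp [omegaSeq]

namespace ClosedUBT

variable {U : Ultrafilter A}

def listTree (T : ClosedUBT A U (ω + 1)) : Set (List A) :=
  {σ | ∃ β, ∃ s ∈ T.mem β, OSeq.Represents s σ}

theorem isUTree_listTree (T : ClosedUBT A U (ω + 1)) : IsUTree U T.listTree := by
  refine ⟨?_, ?_, ?_⟩
  · refine ⟨0, fun _ h => by simp at h, ?_, OSeq.represents_nil _⟩
    exact (T.nonsucc 0 (by simp) (not_exists_eq_add_one_of_isSuccPrelimit isSuccPrelimit_zero) _).2
      fun γ hγ => by simp at hγ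
  · rintro σ ⟨β, s, hs, hσ⟩ τ hτ
    have hle : (τ.length : Ordinal) ≤ β := hσ.1 ▸ Nat.cast_le.2 hτ.length_le
    exact ⟨_, _, T.isTree β _ (hσ.lt_omega0.trans (lt_add_one ω)) hle s hs,
      hσ.ores_of_prefix hτ hle⟩
  · rintro σ ⟨β, s, hs, hσ⟩
    have hβ : β + 1 < ω + 1 := by simpa using hσ.lt_omega0
    filter_upwards [T.succ β hβ s hs] with a ha
    exact ⟨β + 1, _, ha, hσ.oext a⟩

theorem omegaSeq_mem_of_mem_branches (T : ClosedUBT A U (ω + 1)) {t : ℕ → A}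
    (ht : t ∈ branches T.listTree) : omegaSeq t ∈ T.mem ω := by
  refine (T.nonsucc ω (lt_add_one ω)
    (not_exists_eq_add_one_of_isSuccPrelimit isSuccLimit_omega0.isSuccPrelimit) _).2 ?_
  intro γ hγ
  obtain ⟨n, rfl⟩ := Ordinal.lt_omega0.1 hγ
  obtain ⟨β, s, hs, hrep⟩ := ht n
  obtain rfl : β = n := by rw [← hrep.1]; simp [seg]
  rwa [(OSeq.represents_seg (omegaSeq_natCast t) n hγ.le).seq_unique hrep]

end ClosedUBT

namespace IsUTree

variable {U : Ultrafilter A} {L : Set (List A)}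

def toClosedUBT (hL : IsUTree U L) : ClosedUBT A U (ω + 1) where
  mem β := {s | ∀ γ (hγ : γ ≤ β) σ, (ores s γ hγ).Represents σ → σ ∈ L}
  isTree _ _ _ hγ _ hs δ hδ := hs δ (hδ.trans hγ)
  succ β hβ s hs := by
    obtain ⟨k, rfl⟩ := Ordinal.lt_omega0.1 (by simpa using hβ)
    obtain ⟨σ, hσ⟩ := OSeq.exists_represents s
    filter_upwards [hL.2.2 σ (hs _ le_rfl σ hσ)] with a ha γ hγ τ hτ
    rcases hγ.lt_or_eq with hlt | rfl
    · have hγk : γ ≤ k := Order.lt_add_one_iff.1 hlt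
      rw [ores_oext_of_le s a hγk] at hτ
      exact hs γ hγk τ hτ
    · rwa [hτ.list_unique (hσ.oext a)]
  nonsucc β _ hβ s := by
    refine ⟨fun hs γ hγ δ hδ => hs δ (hδ.trans hγ.le), fun H γ hγ σ hσ => ?_⟩
    rcases hγ.lt_or_eq with hlt | rfl
    · exact H γ hlt γ le_rfl σ hσ
    · rcases σ.eq_nil_or_concat with rfl | ⟨τ, b, rfl⟩
      · exact hL.1
      · exact absurd ⟨τ.length, by rw [← hσ.1]; simp⟩ hβ

theorem mem_branches_of_mem_toClosedUBT (hL : IsUTree U L) {s : OSeq A ω}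
    (hs : s ∈ hL.toClosedUBT.mem ω) : (fun n : ℕ => s n (natCast_lt_omega0 n)) ∈ branches L :=
  fun n => hs n (natCast_lt_omega0 n).le _ (OSeq.represents_seg (fun _ _ => rfl) n _)

end IsUTree

end UMeas

theorem stmt13 {A : Type u} (U : Ultrafilter A) (l m : Cardinal.{u}) :
    UMeas.LMARegular U l m Ordinal.omega0 ↔
      ∃ X : (Cardinal.ord l).ToType → Set (ℕ → A),
        (∀ β, UMeas.ULarge U (X β)) ∧
        ∀ S : Set (Cardinal.ord l).ToType, Cardinal.mk ↥S = m → ⋂ β ∈ S, X β = ∅ := by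
  constructor
  · rintro ⟨T, hT⟩
    refine ⟨fun β => UMeas.branches (T β).listTree,
      fun β => ⟨_, (T β).isUTree_listTree, subset_rfl⟩, fun S hS => ?_⟩
    refine Set.eq_empty_of_forall_notMem fun t ht => hT S hS ⟨UMeas.omegaSeq t, fun β hβ => ?_⟩
    exact (T β).omegaSeq_mem_of_mem_branches (Set.mem_iInter₂.1 ht β hβ)
  · rintro ⟨X, hX, hXS⟩
    choose L hL hLX using hX
    refine ⟨fun β => (hL β).toClosedUBT, fun S hS ⟨s, hs⟩ => ?_⟩
    have hmem : (fun n : ℕ => s n (Ordinal.natCast_lt_omega0 n)) ∈ ⋂ β ∈ S, X β :=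
      Set.mem_iInter₂.2 fun β hβ => hLX β ((hL β).mem_branches_of_mem_toClosedUBT (hs β hβ))
    simp [hXS S hS] at hmem
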